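/- arXiv:2401.04604 — 5 statements merged into one kernel-verified Lean document; each statement's English description precedes it below -/
import Mathlib

section
/- Every automorphism α of G = GL₂(F₂[t]) is the composite of an inner automorphism and a Reiner automorphism: there exist g ∈ GL₂(F₂[t]), a group automorphism τ of GL₂(F₂[t]), and an additive group automorphism φ of F₂[t] with φ(1) = 1, such that τ(M) = M for every M in the embedded subgroup GL₂(F₂), τ(u(a)) = u(φ(a)) for every a ∈ F₂[t], and α(X) = g·τ(X)·g⁻¹ for all X ∈ GL₂(F₂[t]). -/
/-- The unipotent element `u(a) = [[1,a],[0,1]]` of `GL₂(R)`. -/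
noncomputable def unip {R : Type*} [CommRing R] (a : R) :
    Matrix.GeneralLinearGroup (Fin 2) R :=
  ⟨!![1, a; 0, 1], !![1, -a; 0, 1],
    by simp [Matrix.mul_fin_two, Matrix.one_fin_two],
    by simp [Matrix.mul_fin_two, Matrix.one_fin_two]⟩

/-- The embedding `GL₂(F) →* GL₂(F[t])` induced by the constant-polynomial map. -/
noncomputable def embGL2 (F : Type*) [CommRing F] :
    Matrix.GeneralLinearGroup (Fin 2) F →* Matrix.GeneralLinearGroup (Fin 2) (Polynomial F) :=
  Matrix.GeneralLinearGroup.map (Polynomial.C : F →+* Polynomial F)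

/-! Let `R` be a Bézout domain whose only unit is `1` (so `2 = 0` and every determinant is `1`).
If `X² = 1`, then `(X - 1)² = 0`, so a nonzero column of `X - 1` is fixed by `X`; its primitive
part is a unimodular fixed vector, and completing it to a basis conjugates `X` to an upper
triangular, hence unipotent, matrix `u(d)`. After conjugating `α` so that `α (u 1) = u d`, the
group `U = {u b}` is preserved, being the centraliser of `u d`. The image `m` of
`w = [[0,1],[1,0]]` is an involution outside `U` with `(m u(d))³ = 1`; the lower left entry of
this relation forces `d = 1` and `m = u(p) w u(p)`. A further conjugation by `u(p)` gives `τ`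
fixing `w` and `u 1`, which generate `GL₂(F₂)`, and `τ` restricted to `U ≅ (R, +)` is `φ`. -/

open Matrix

section Elementary

variable {R S : Type*} [CommRing R] [CommRing S]

@[simp]
lemma val_unip (a : R) : (unip a : Matrix (Fin 2) (Fin 2) R) = !![1, a; 0, 1] := rfl

lemma unip_add (a b : R) : unip (a + b) = unip a * unip b :=
  GeneralLinearGroup.ext fun i j => by
    fin_cases i <;> fin_cases j <;> simp [Matrix.mul_apply, add_comm]

lemma unip_zero : unip (0 : R) = 1 :=
  GeneralLinearGroup.ext fun i j => by fin_cases i <;> fin_cases j <;> simp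

lemma unip_injective : Function.Injective (unip : R → GL (Fin 2) R) := fun a b h => by
  simpa using congrArg (fun X : GL (Fin 2) R => X.val 0 1) h

noncomputable def weyl : GL (Fin 2) R :=
  ⟨!![0, 1; 1, 0], !![0, 1; 1, 0],
    by simp [Matrix.one_fin_two], by simp [Matrix.one_fin_two]⟩

@[simp]
lemma val_weyl : ((weyl : GL (Fin 2) R) : Matrix (Fin 2) (Fin 2) R) = !![0, 1; 1, 0] := rfl

lemma map_unip (f : R →+* S) (a : R) : GeneralLinearGroup.map f (unip a) = unip (f a) :=
  GeneralLinearGroup.ext fun i j => by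
    fin_cases i <;> fin_cases j <;> simp [GeneralLinearGroup.map_apply]

lemma map_weyl (f : R →+* S) : GeneralLinearGroup.map f (weyl : GL (Fin 2) R) = weyl :=
  GeneralLinearGroup.ext fun i j => by
    fin_cases i <;> fin_cases j <;> simp [GeneralLinearGroup.map_apply]

lemma commute_unip (a b : R) : Commute (unip a) (unip b) := by
  rw [Commute, SemiconjBy, ← unip_add, ← unip_add, add_comm]

lemma weyl_mul_self : (weyl * weyl : GL (Fin 2) R) = 1 :=
  GeneralLinearGroup.ext fun i j => by fin_cases i <;> fin_cases j <;> simp [Matrix.mul_apply]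

lemma weyl_mul_unip_one_ne [Nontrivial R] :
    (weyl * unip 1 : GL (Fin 2) R) ≠ unip 1 * weyl := fun h => by
  simpa [Matrix.mul_apply] using congrArg (fun X : GL (Fin 2) R => X.val 0 0) h

end Elementary

section TrivialUnits

variable {R : Type*} [CommRing R] [Subsingleton Rˣ]

lemma eq_one_of_isUnit {r : R} (h : IsUnit r) : r = 1 :=
  congrArg Units.val (Subsingleton.elim h.unit 1)

variable (R) in
lemma two_eq_zero_of_subsingleton_units : (2 : R) = 0 := by
  linear_combination -(eq_one_of_isUnit (isUnit_one.neg : IsUnit (-1 : R)))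

lemma det_eq_one (X : GL (Fin 2) R) : (X : Matrix (Fin 2) (Fin 2) R).det = 1 :=
  eq_one_of_isUnit ((Matrix.isUnit_iff_isUnit_det _).mp X.isUnit)

lemma unip_mul_self (a : R) : unip a * unip a = 1 := by
  rw [← unip_add, ← unip_zero]
  congr 1
  linear_combination a * two_eq_zero_of_subsingleton_units R

lemma eq_unip_of_val_one_zero_eq_zero {X : GL (Fin 2) R} (h : X.val 1 0 = 0) :
    X = unip (X.val 0 1) := by
  have hdet : X.val 0 0 * X.val 1 1 = 1 := by
    simpa [Matrix.det_fin_two, h] using det_eq_one X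
  have h00 := eq_one_of_isUnit (IsUnit.of_mul_eq_one _ hdet)
  have h11 := eq_one_of_isUnit (IsUnit.of_mul_eq_one_right _ hdet)
  exact GeneralLinearGroup.ext fun i j => by
    fin_cases i <;> fin_cases j <;> simp [h00, h11, h]

lemma weyl_mul_unip_one_pow_three : (weyl * unip 1 : GL (Fin 2) R) ^ 3 = 1 :=
  GeneralLinearGroup.ext fun i j => by
    fin_cases i <;> fin_cases j <;>
      simp [pow_succ, Matrix.mul_apply, Fin.sum_univ_two] <;>
      linear_combination two_eq_zero_of_subsingleton_units R

end TrivialUnits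

section Domain

variable {R : Type*} [CommRing R] [IsDomain R] [Subsingleton Rˣ]

lemma eq_unip_of_commute_unip {d : R} (hd : d ≠ 0) {g : GL (Fin 2) R}
    (h : Commute g (unip d)) : g = unip (g.val 0 1) := by
  have hc : d * g.val 1 0 = 0 := by
    simpa [Matrix.mul_apply, Fin.sum_univ_two]
      using congrArg (fun X : GL (Fin 2) R => X.val 0 0) h.eq
  exact eq_unip_of_val_one_zero_eq_zero ((mul_eq_zero.mp hc).resolve_left hd)

lemma eq_unip_mul_weyl_mul_unip {m : GL (Fin 2) R} (hm : m * m = 1) (hmU : ∀ b, m ≠ unip b)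
    {c : R} (h3 : (m * unip c) ^ 3 = 1) : c = 1 ∧ ∃ p, m = unip p * weyl * unip p := by
  have h2 := two_eq_zero_of_subsingleton_units R
  have hr : m.val 1 0 ≠ 0 := fun h => hmU _ (eq_unip_of_val_one_zero_eq_zero h)
  obtain ⟨p, q, r, s, hpqrs⟩ : ∃ p q r s, m.val = !![p, q; r, s] :=
    ⟨_, _, _, _, Matrix.eta_fin_two _⟩
  replace hr : r ≠ 0 := by simpa [hpqrs] using hr
  have hdet : p * s - q * r = 1 := by simpa [hpqrs, Matrix.det_fin_two_of] using det_eq_one m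
  have hsq : r * p + s * r = 0 := by
    simpa [Matrix.mul_apply, Fin.sum_univ_two, hpqrs]
      using congrArg (fun X : GL (Fin 2) R => X.val 1 0) hm
  have hcube :
      (r * p + (r * c + s) * r) * p + (r * (p * c + q) + (r * c + s) * (r * c + s)) * r = 0 := by
    simpa [pow_succ, Matrix.mul_apply, Fin.sum_univ_two, hpqrs]
      using congrArg (fun X : GL (Fin 2) R => X.val 1 0) h3
  obtain rfl : s = p :=
    sub_eq_zero.mp ((mul_eq_zero.mp (by linear_combination hsq - r * p * h2)).resolve_left hr)
  have hrc : r * c = 1 := by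
    have : r * (r * c - 1) ^ 2 = 0 := by
      linear_combination hcube + r * hdet - (2 * r * s ^ 2 - r + 2 * r ^ 2 * c * s + r ^ 2 * c) * h2
    exact sub_eq_zero.mp (pow_eq_zero_iff two_ne_zero |>.mp ((mul_eq_zero.mp this).resolve_left hr))
  obtain rfl : r = 1 := eq_one_of_isUnit (IsUnit.of_mul_eq_one _ hrc)
  have hq : q = s * s + 1 := by linear_combination -hdet - h2
  refine ⟨by simpa using hrc, s, GeneralLinearGroup.ext fun i j => ?_⟩
  fin_cases i <;> fin_cases j <;> simp [Matrix.mul_apply, Fin.sum_univ_two, hpqrs, hq]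

end Domain

lemma exists_eq_mul_isCoprime {R : Type*} [CommRing R] [IsDomain R] [IsBezout R] {x y : R}
    (h : x ≠ 0 ∨ y ≠ 0) : ∃ p x' y', p ≠ 0 ∧ x = p * x' ∧ y = p * y' ∧ IsCoprime x' y' := by
  obtain ⟨x', hx⟩ := IsBezout.gcd_dvd_left x y
  obtain ⟨y', hy⟩ := IsBezout.gcd_dvd_right x y
  obtain ⟨a, b, hab⟩ := IsBezout.gcd_eq_sum x y
  set p := IsBezout.gcd x y
  have hp : p ≠ 0 := fun h0 => by
    rw [h0, zero_mul] at hx hy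
    exact h.elim (· hx) (· hy)
  exact ⟨p, x', y', hp, hx, hy, a, b,
    mul_left_cancel₀ hp (by linear_combination hab - a * hx - b * hy)⟩

section Conjugacy

variable {R : Type*} [CommRing R] [Subsingleton Rˣ]

lemma exists_conj_eq_unip_of_mulVec_eq_self {X : GL (Fin 2) R} {x y : R} (hxy : IsCoprime x y)
    (hX : X.val *ᵥ ![x, y] = ![x, y]) : ∃ H d, H⁻¹ * X * H = unip d := by
  obtain ⟨u, v, huv⟩ := hxy
  let H : GL (Fin 2) R := Matrix.SpecialLinearGroup.toGL
    ⟨!![x, -v; y, u], by simp [Matrix.det_fin_two_of]; linear_combination huv⟩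
  have hH : H.val = !![x, -v; y, u] := rfl
  obtain ⟨Y, hY⟩ : ∃ Y, H⁻¹ * X * H = Y := ⟨_, rfl⟩
  refine ⟨H, _, hY.trans (eq_unip_of_val_one_zero_eq_zero ?_)⟩
  have hHY : H.val * Y.val = X.val * H.val := by
    rw [← Units.val_mul, ← Units.val_mul, ← hY]; group
  have hHY0 : x * Y.val 0 0 - v * Y.val 1 0 = X.val 0 0 * x + X.val 0 1 * y := by
    simpa [hH, Matrix.mul_apply, Fin.sum_univ_two, sub_eq_add_neg] using congrFun (congrFun hHY 0) 0
  have hHY1 : y * Y.val 0 0 + u * Y.val 1 0 = X.val 1 0 * x + X.val 1 1 * y := by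
    simpa [hH, Matrix.mul_apply, Fin.sum_univ_two] using congrFun (congrFun hHY 1) 0
  obtain ⟨hX0, hX1⟩ : X.val 0 0 * x + X.val 0 1 * y = x ∧ X.val 1 0 * x + X.val 1 1 * y = y := by
    simpa using hX
  linear_combination x * hHY1 - y * hHY0 + x * hX1 - y * hX0 - Y.val 1 0 * huv

variable [IsDomain R] [IsBezout R]

lemma exists_isCoprime_mulVec_eq_self {X : GL (Fin 2) R} (hX : X * X = 1) :
    ∃ x y, IsCoprime x y ∧ X.val *ᵥ ![x, y] = ![x, y] := by
  have h2 := two_eq_zero_of_subsingleton_units R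
  obtain ⟨a, b, c, d, habcd⟩ : ∃ a b c d, X.val = !![a, b; c, d] :=
    ⟨_, _, _, _, Matrix.eta_fin_two _⟩
  have hsq := fun i j => congrArg (fun X : GL (Fin 2) R => X.val i j) hX
  have h00 : a * a + b * c = 1 := by simpa [Matrix.mul_apply, Fin.sum_univ_two, habcd] using hsq 0 0
  have h10 : c * a + d * c = 0 := by simpa [Matrix.mul_apply, Fin.sum_univ_two, habcd] using hsq 1 0
  by_cases h : a - 1 ≠ 0 ∨ c ≠ 0
  · obtain ⟨p, x, y, hp, hx, hy, hxy⟩ := exists_eq_mul_isCoprime h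
    have hfix0 : a * x + b * y = x :=
      mul_left_cancel₀ hp (by linear_combination (1 - a) * hx - b * hy + h00 + (1 - a) * h2)
    have hfix1 : c * x + d * y = y :=
      mul_left_cancel₀ hp (by linear_combination -c * hx + (1 - d) * hy + h10 - c * h2)
    exact ⟨x, y, hxy, by rw [habcd, mulVec_fin_two]; simp [hfix0, hfix1]⟩
  · obtain ⟨ha, hc⟩ : a - 1 = 0 ∧ c = 0 := by simpa using h
    exact ⟨1, 0, isCoprime_one_left, by rw [habcd, mulVec_fin_two]; simp [sub_eq_zero.mp ha, hc]⟩

lemma exists_conj_eq_unip_of_mul_self_eq_one {X : GL (Fin 2) R} (hX : X * X = 1) :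
    ∃ H d, H⁻¹ * X * H = unip d :=
  have ⟨_, _, hxy, hfix⟩ := exists_isCoprime_mulVec_eq_self hX
  exists_conj_eq_unip_of_mulVec_eq_self hxy hfix

end Conjugacy

section Automorphisms

variable {R : Type*} [CommRing R] [IsDomain R] [Subsingleton Rˣ]

lemma MulAut.exists_map_unip_eq_unip (β : MulAut (GL (Fin 2) R)) {d : R} (hd : d ≠ 0)
    (h : β (unip 1) = unip d) (a : R) : ∃ b, β (unip a) = unip b :=
  ⟨_, eq_unip_of_commute_unip hd (h ▸ (commute_unip a 1).map β)⟩

lemma MulAut.exists_addEquiv_of_map_unip_one (τ : MulAut (GL (Fin 2) R))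
    (h : τ (unip 1) = unip 1) : ∃ φ : R ≃+ R, φ 1 = 1 ∧ ∀ a, τ (unip a) = unip (φ a) := by
  choose f hf using τ.exists_map_unip_eq_unip one_ne_zero h
  choose g hg using MulAut.exists_map_unip_eq_unip τ.symm one_ne_zero (τ.symm_apply_eq.mpr h.symm)
  refine ⟨{ toFun := f
            invFun := g
            left_inv a := unip_injective (by rw [← hg, ← hf, τ.symm_apply_apply])
            right_inv a := unip_injective (by rw [← hf, ← hg, τ.apply_symm_apply])
            map_add' a b := unip_injective (by rw [← hf, unip_add, map_mul, hf, hf, unip_add]) },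
    unip_injective (by rw [← h]; exact (hf 1).symm), hf⟩

lemma MulAut.eq_one_and_exists_map_weyl (β : MulAut (GL (Fin 2) R)) {d : R}
    (h : β (unip 1) = unip d) : d = 1 ∧ ∃ p, β weyl = unip p * weyl * unip p := by
  refine eq_unip_mul_weyl_mul_unip (by rw [← map_mul, weyl_mul_self, map_one]) (fun b hb => ?_)
    (by rw [← h, ← map_mul, ← map_pow, weyl_mul_unip_one_pow_three, map_one])
  refine weyl_mul_unip_one_ne (β.injective ?_)
  rw [map_mul, map_mul, hb, h, (commute_unip b d).eq]

variable [IsBezout R]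

theorem MulAut.exists_eq_conj_mul_reiner (α : MulAut (GL (Fin 2) R)) :
    ∃ (g : GL (Fin 2) R) (τ : MulAut (GL (Fin 2) R)) (φ : R ≃+ R), φ 1 = 1 ∧ τ weyl = weyl ∧
      (∀ a, τ (unip a) = unip (φ a)) ∧ ∀ X, α X = g * τ X * g⁻¹ := by
  obtain ⟨H, d, hH⟩ := exists_conj_eq_unip_of_mul_self_eq_one
    (X := α (unip 1)) (by rw [← map_mul, unip_mul_self, map_one])
  let β := MulAut.conj H⁻¹ * α
  have hβ : β (unip 1) = unip d := by simpa [β, MulAut.conj_apply] using hH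
  obtain ⟨rfl, p, hp⟩ := β.eq_one_and_exists_map_weyl hβ
  let τ := MulAut.conj (unip p)⁻¹ * β
  have hτ : ∀ X, τ X = (unip p)⁻¹ * β X * unip p := fun X => by simp [τ]
  obtain ⟨φ, hφ1, hφ⟩ := τ.exists_addEquiv_of_map_unip_one
    (by rw [hτ, hβ, (commute_unip p 1).inv_mul_cancel])
  have hτw : τ weyl = weyl := by
    rw [hτ, hp]
    simp only [mul_assoc, inv_mul_cancel_left, unip_mul_self, mul_one]
  refine ⟨H * unip p, τ, φ, hφ1, hτw, hφ, fun X => ?_⟩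
  simp only [hτ, β, MulAut.mul_apply, MulAut.conj_apply]
  group

end Automorphisms

instance Polynomial.subsingleton_units {K : Type*} [CommRing K] [IsDomain K] [Subsingleton Kˣ] :
    Subsingleton (Polynomial K)ˣ :=
  subsingleton_of_forall_eq 1 fun u => by
    obtain ⟨r, hr, hru⟩ := Polynomial.isUnit_iff.mp u.isUnit
    ext
    rw [← hru, eq_one_of_isUnit hr, Polynomial.C_1, Units.val_one]

lemma closure_weyl_unip_one_eq_top :
    Subgroup.closure {weyl, unip 1} = (⊤ : Subgroup (GL (Fin 2) (ZMod 2))) := by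
  have hw : weyl ∈ Subgroup.closure {weyl, (unip 1 : GL (Fin 2) (ZMod 2))} :=
    Subgroup.subset_closure (by simp)
  have hu : unip 1 ∈ Subgroup.closure {weyl, (unip 1 : GL (Fin 2) (ZMod 2))} :=
    Subgroup.subset_closure (by simp)
  have hcases : ∀ M : GL (Fin 2) (ZMod 2), M = 1 ∨ M = unip 1 ∨ M = weyl ∨ M = weyl * unip 1 ∨
      M = unip 1 * weyl ∨ M = weyl * unip 1 * weyl := by
    decide
  refine eq_top_iff.mpr fun M _ => ?_
  rcases hcases M with rfl | rfl | rfl | rfl | rfl | rfl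
  exacts [one_mem _, hu, hw, mul_mem hw hu, mul_mem hu hw, mul_mem (mul_mem hw hu) hw]

/-- Every automorphism `α` of `GL₂(F₂[t])` is the composite of an inner automorphism and
a Reiner automorphism: there are `g ∈ GL₂(F₂[t])`, an automorphism `τ` of `GL₂(F₂[t])`,
and an additive automorphism `φ` of `F₂[t]` with `φ 1 = 1`, such that `τ` fixes the
embedded `GL₂(F₂)` pointwise, `τ (u a) = u (φ a)` for all `a`, and
`α X = g * τ X * g⁻¹` for all `X`. -/
theorem aut_GL2_F2t_eq_inner_mul_reiner
    (α : MulAut (Matrix.GeneralLinearGroup (Fin 2) (Polynomial (ZMod 2)))) :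
    ∃ (g : Matrix.GeneralLinearGroup (Fin 2) (Polynomial (ZMod 2)))
      (τ : MulAut (Matrix.GeneralLinearGroup (Fin 2) (Polynomial (ZMod 2))))
      (φ : Polynomial (ZMod 2) ≃+ Polynomial (ZMod 2)),
      φ 1 = 1 ∧
      (∀ M : Matrix.GeneralLinearGroup (Fin 2) (ZMod 2),
        τ (embGL2 (ZMod 2) M) = embGL2 (ZMod 2) M) ∧
      (∀ a : Polynomial (ZMod 2), τ (unip a) = unip (φ a)) ∧
      (∀ X : Matrix.GeneralLinearGroup (Fin 2) (Polynomial (ZMod 2)),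
        α X = g * τ X * g⁻¹) := by
  obtain ⟨g, τ, φ, hφ1, hτw, hτu, hα⟩ := α.exists_eq_conj_mul_reiner
  refine ⟨g, τ, φ, hφ1, fun M => ?_, hτu, hα⟩
  have hτ : τ.toMonoidHom.comp (embGL2 (ZMod 2)) = embGL2 (ZMod 2) :=
    MonoidHom.eq_of_eqOn_dense closure_weyl_unip_one_eq_top (by
      rintro _ (rfl | rfl) <;> simp [embGL2, map_weyl, map_unip, hτw, hτu, hφ1])
  exact DFunLike.congr_fun hτ M
end

section
/- Let H be a group, (G i)_{i ∈ ι} a family of groups, and φ i : H →* G i homomorphisms such that for every i the image of φ i is contained in the center of G i. Let P = Monoid.PushoutI φ be the amalgamated free product, with canonical maps of : G k →* P. Then for any two distinct indices i ≠ j and any element g ∈ G i, there exists a group automorphism ψ of P (a 'partial conjugation') such that ψ(of(x)) = of(g)·of(x)·of(g)⁻¹ for every x ∈ G j, and ψ(of(x)) = of(x) for every index k ≠ j and every x ∈ G k. -/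
/-!
Conjugating the factor `G j` by an element `c` and fixing all other factors is compatible with the
amalgamation as soon as `c` commutes with the image of `H`; for `c = of i g` this follows from
`φ i H` being central in `G i`. When `i ≠ j` the map attached to `of i g` fixes `of i g⁻¹`, so
composing it with the map attached to `of i g⁻¹` gives the map attached to `1`, the identity.
-/

namespace Monoid.PushoutI

variable {ι H : Type*} [Group H] {G : ι → Type*} [∀ i, Group (G i)] {φ : ∀ i, H →* G i}

open scoped Classical in
noncomputable def partialConj (j : ι) (c : PushoutI φ) (hc : ∀ h, Commute c (base φ h)) :
    PushoutI φ →* PushoutI φ :=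
  lift (fun k => if k = j then (MulAut.conj c).toMonoidHom.comp (of k) else of k) (base φ) <| by
    intro k
    split_ifs with hk
    · ext h
      simp [of_apply_eq_base, (hc h).eq]
    · exact of_comp_eq_base k

variable (j : ι) (c : PushoutI φ) (hc : ∀ h, Commute c (base φ h))

@[simp]
theorem partialConj_of_self (x : G j) : partialConj j c hc (of j x) = c * of j x * c⁻¹ := by
  simp [partialConj]

@[simp]
theorem partialConj_of_of_ne {k : ι} (hk : k ≠ j) (x : G k) :
    partialConj j c hc (of k x) = of k x := by
  simp [partialConj, hk]

@[simp]
theorem partialConj_base (h : H) : partialConj j c hc (base φ h) = base φ h := by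
  simp [partialConj]

theorem partialConj_one (hc : ∀ h, Commute 1 (base φ h)) :
    partialConj j 1 hc = MonoidHom.id (PushoutI φ) := by
  ext k x
  · by_cases hk : k = j
    · subst hk; simp
    · simp [hk]
  · simp

theorem partialConj_comp_partialConj (d : PushoutI φ) (hd : ∀ h, Commute d (base φ h))
    (hfix : partialConj j c hc d = d) :
    (partialConj j c hc).comp (partialConj j d hd) =
      partialConj j (d * c) (fun h => (hd h).mul_left (hc h)) := by
  ext k x
  · by_cases hk : k = j
    · subst hk; simp [hfix, mul_assoc]
    · simp [hk]
  · simp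

theorem commute_of_base_of_commute {i : ι} {g : G i} (hg : ∀ h, Commute g (φ i h)) (h : H) :
    Commute (of (φ := φ) i g) (base φ h) :=
  of_apply_eq_base φ i h ▸ (hg h).map (of i)

theorem partialConj_of_comp_partialConj_of {i : ι} (hij : i ≠ j) {g₁ g₂ : G i}
    (hg₁ : ∀ h, Commute g₁ (φ i h)) (hg₂ : ∀ h, Commute g₂ (φ i h)) (hg : g₁ * g₂ = 1) :
    (partialConj j (of i g₁) (commute_of_base_of_commute hg₁)).comp
        (partialConj j (of i g₂) (commute_of_base_of_commute hg₂)) = MonoidHom.id (PushoutI φ) := by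
  rw [partialConj_comp_partialConj _ _ _ _ _ (partialConj_of_of_ne _ _ _ hij _)]
  simp only [← map_mul, mul_eq_one_comm.mp hg, map_one]
  exact partialConj_one j _

end Monoid.PushoutI

open Monoid.PushoutI in
/-- Partial conjugations of an amalgamated free product along a central subgroup:
if each `φ i` has image in the centre of `G i`, then for distinct indices `i ≠ j` and
`g ∈ G i`, there is an automorphism of the pushout conjugating the image of `G j`
by `of g` and fixing the images of all other factors pointwise. -/
theorem partial_conjugation_of_amalgamated_product
    {ι : Type*} {H : Type*} [Group H] {G : ι → Type*} [∀ i, Group (G i)]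
    (φ : ∀ i, H →* G i)
    (hcentral : ∀ i, (φ i).range ≤ Subgroup.center (G i))
    {i j : ι} (hij : i ≠ j) (g : G i) :
    ∃ ψ : Monoid.PushoutI φ ≃* Monoid.PushoutI φ,
      (∀ x : G j, ψ (Monoid.PushoutI.of (φ := φ) j x) =
          Monoid.PushoutI.of (φ := φ) i g * Monoid.PushoutI.of (φ := φ) j x *
            (Monoid.PushoutI.of (φ := φ) i g)⁻¹) ∧
      (∀ k : ι, k ≠ j → ∀ x : G k,
          ψ (Monoid.PushoutI.of (φ := φ) k x) = Monoid.PushoutI.of (φ := φ) k x) := by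
  have hg : ∀ h, Commute g (φ i h) := fun h =>
    Subgroup.mem_center_iff.mp (hcentral i ⟨h, rfl⟩) g
  have hg_inv : ∀ h, Commute g⁻¹ (φ i h) := fun h => (hg h).inv_left
  refine ⟨MonoidHom.toMulEquiv (partialConj j (of i g) (commute_of_base_of_commute hg))
      (partialConj j (of i g⁻¹) (commute_of_base_of_commute hg_inv))
      (partialConj_of_comp_partialConj_of j hij hg_inv hg (inv_mul_cancel g))
      (partialConj_of_comp_partialConj_of j hij hg hg_inv (mul_inv_cancel g)),
    partialConj_of_self j _ (commute_of_base_of_commute hg),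
    fun k hk => partialConj_of_of_ne j _ (commute_of_base_of_commute hg) hk⟩
end

section
/- Let F and E be finite fields with E an F-algebra, |F| = q and |E| = q². Then the number of group automorphisms σ of the multiplicative group Eˣ such that σ(u) = u for every u ∈ Eˣ lying in the image of Fˣ under the algebra map equals 2·φ(q+1) if q is odd, and φ(q+1) if q is even, where φ denotes Euler's totient function (Nat.totient). -/
/-!
`Eˣ` is cyclic of order `q² - 1 = (q - 1)(q + 1)`, so its automorphisms are the power maps
`x ↦ x ^ k` with `k ∈ (ZMod (q² - 1))ˣ`, and the image of `Fˣ` is its unique subgroup of order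
`q - 1`, the solutions of `u ^ (q - 1) = 1`. A power map fixes that subgroup pointwise iff
`k ≡ 1 [MOD q - 1]`, i.e. iff `k` lies in the kernel of the surjection
`(ZMod (q² - 1))ˣ → (ZMod (q - 1))ˣ`, which has `φ((q - 1)(q + 1)) / φ(q - 1)` elements.
As `gcd(q - 1, q + 1)` is `2` for odd `q` and `1` for even `q`, this is `2 φ(q + 1)`,
resp. `φ(q + 1)`.
-/

theorem Nat.totient_sub_one_mul_add_one (q : ℕ) :
    Nat.totient ((q - 1) * (q + 1)) =
      Nat.totient (q - 1) * if Odd q then 2 * Nat.totient (q + 1) else Nat.totient (q + 1) := by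
  have key := Nat.totient_gcd_mul_totient_mul (q - 1) (q + 1)
  split_ifs with hq
  · obtain ⟨m, rfl⟩ := hq
    have hgcd : (2 * m + 1 - 1).gcd (2 * m + 1 + 1) = 2 := by
      rw [show 2 * m + 1 - 1 = 2 * m by omega, show 2 * m + 1 + 1 = 2 * (m + 1) by ring,
        Nat.gcd_mul_left, Nat.coprime_self_add_right.2 (Nat.coprime_one_right m), mul_one]
    rw [hgcd, Nat.totient_two, one_mul] at key
    rw [key]; ring
  · obtain ⟨m, rfl⟩ := Nat.not_odd_iff_even.1 hq
    have hgcd : (m + m - 1).gcd (m + m + 1) = 1 := by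
      rcases m with _ | m
      · rfl
      rw [show m + 1 + (m + 1) + 1 = 2 + (m + 1 + (m + 1) - 1) by omega, Nat.gcd_add_self_right]
      exact Nat.coprime_two_right.2 (by rw [Nat.odd_iff]; omega)
    rw [hgcd, Nat.totient_one, one_mul, mul_one] at key
    exact key

theorem ZMod.card_ker_unitsMap_mul_totient {m n : ℕ} [NeZero m] (hm : n ∣ m) :
    Nat.card (ZMod.unitsMap hm).ker * n.totient = m.totient := by
  have : NeZero n := ⟨by rintro rfl; exact NeZero.ne m (Nat.eq_zero_of_zero_dvd hm)⟩
  rw [← ZMod.card_units_eq_totient, ← ZMod.card_units_eq_totient, ← Nat.card_eq_fintype_card,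
    ← Nat.card_eq_fintype_card, ← Subgroup.card_mul_index (ZMod.unitsMap hm).ker,
    Subgroup.index_ker, MonoidHom.range_eq_top_of_surjective _ (ZMod.unitsMap_surjective hm),
    Subgroup.card_top]

section CyclicGroup

variable {G : Type*} [Group G]

theorem IsCyclic.mulAutMulEquiv_symm_apply_eq_pow [Finite G] [IsCyclic G]
    (k : (ZMod (Nat.card G))ˣ) (g : G) :
    (IsCyclic.mulAutMulEquiv G).symm k g = g ^ (k : ZMod (Nat.card G)).val := by
  obtain ⟨a, rfl⟩ := (zmodCyclicMulEquiv (inferInstance : IsCyclic G)).surjective g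
  rw [IsCyclic.mulAutMulEquiv_symm_apply_apply, MulEquiv.symm_apply_apply, ← map_pow]
  congr 1
  -- transported to `ZMod (Nat.card G)`, the automorphism is multiplication by `k`
  change Multiplicative.ofAdd ((k : ZMod _) * Multiplicative.toAdd a) = _
  rw [← ofAdd_toAdd a, ← ofAdd_nsmul, nsmul_eq_mul, ZMod.natCast_zmod_val, toAdd_ofAdd]

theorem IsCyclic.forall_pow_eq_one_pow_val_eq_self_iff [Finite G] [IsCyclic G] {d : ℕ}
    (hd : d ∣ Nat.card G) (a : ZMod (Nat.card G)) :
    (∀ g : G, g ^ d = 1 → g ^ a.val = g) ↔ ZMod.castHom hd (ZMod d) a = 1 := by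
  rw [ZMod.castHom_apply, ZMod.cast_eq_val, ← Nat.cast_one, ZMod.natCast_eq_natCast_iff]
  constructor
  · intro h
    obtain ⟨g₀, hg₀⟩ := IsCyclic.exists_ofOrder_eq_natCard (α := G)
    obtain ⟨c, hc⟩ := hd
    have hc0 : c ≠ 0 := by rintro rfl; exact Nat.card_pos.ne' (by rw [hc, mul_zero])
    have horder : orderOf (g₀ ^ c) = d := by
      rw [orderOf_pow_of_dvd hc0 ⟨d, by rw [hg₀, hc, mul_comm]⟩, hg₀, hc,
        Nat.mul_div_cancel _ (Nat.pos_of_ne_zero hc0)]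
    have := h _ (horder ▸ pow_orderOf_eq_one (g₀ ^ c))
    rwa [← horder, ← pow_eq_pow_iff_modEq, pow_one]
  · intro h g hg
    conv_rhs => rw [← pow_one g]
    exact pow_eq_pow_iff_modEq.2 (h.of_dvd (orderOf_dvd_of_pow_eq_one hg))

theorem IsCyclic.card_mulAut_fixing_pow_eq_one_mul_totient [Finite G] [IsCyclic G] {d : ℕ}
    (hd : d ∣ Nat.card G) :
    Nat.card {σ : MulAut G // ∀ g : G, g ^ d = 1 → σ g = g} * d.totient =
      (Nat.card G).totient := by
  have hfix (k : (ZMod (Nat.card G))ˣ) :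
      k ∈ (ZMod.unitsMap hd).ker ↔ ∀ g : G, g ^ d = 1 → (mulAutMulEquiv G).symm k g = g := by
    simp only [mulAutMulEquiv_symm_apply_eq_pow, forall_pow_eq_one_pow_val_eq_self_iff hd,
      MonoidHom.mem_ker, Units.ext_iff, ZMod.unitsMap_def, Units.coe_map, Units.val_one,
      MonoidHom.coe_coe]
  rw [← Nat.card_congr ((mulAutMulEquiv G).symm.toEquiv.subtypeEquiv hfix),
    ← ZMod.card_ker_unitsMap_mul_totient hd]

end CyclicGroup

theorem IsCyclic.range_eq_ker_powMonoidHom {H G : Type*} [Group H] [Finite H] [CommGroup G]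
    [Finite G] [IsCyclic G] {f : H →* G} (hf : Function.Injective f) :
    f.range = (powMonoidHom (Nat.card H) : G →* G).ker := by
  have hcard : Nat.card f.range = Nat.card H :=
    Nat.card_congr (MonoidHom.ofInjective hf).toEquiv.symm
  refine Subgroup.eq_of_le_of_card_ge ?_ ?_
  · rintro _ ⟨h, rfl⟩
    rw [MonoidHom.mem_ker, powMonoidHom_apply, ← map_pow, pow_card_eq_one', map_one]
  · rw [IsCyclic.card_powMonoidHom_ker, hcard]
    exact Nat.gcd_le_right _ Nat.card_pos

/-- If `F ⊆ E` are finite fields with `|F| = q` and `|E| = q²`, then the number of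
group automorphisms of `Eˣ` fixing the image of `Fˣ` pointwise is `2·φ(q+1)` if `q` is
odd and `φ(q+1)` if `q` is even. -/
theorem card_aut_units_fixing_subfield
    {F E : Type*} [Field F] [Field E] [Fintype F] [Fintype E] [Algebra F E]
    (q : ℕ) (hF : Fintype.card F = q) (hE : Fintype.card E = q ^ 2) :
    Nat.card {σ : MulAut Eˣ //
        ∀ u : Eˣ, (∃ v : Fˣ, Units.map (algebraMap F E).toMonoidHom v = u) → σ u = u} =
      if Odd q then 2 * Nat.totient (q + 1) else Nat.totient (q + 1) := by
  have hq : 2 ≤ q := hF ▸ Fintype.one_lt_card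
  have hcardF : Nat.card Fˣ = q - 1 := by rw [Nat.card_units, Nat.card_eq_fintype_card, hF]
  have hcardE : Nat.card Eˣ = (q - 1) * (q + 1) := by
    rw [Nat.card_units, Nat.card_eq_fintype_card, hE, ← one_pow 2, Nat.sq_sub_sq, mul_comm,
      one_pow]
  have hrange := IsCyclic.range_eq_ker_powMonoidHom (G := Eˣ)
    (Units.map_injective (algebraMap F E).injective)
  have hfix (σ : MulAut Eˣ) :
      (∀ u : Eˣ, (∃ v : Fˣ, Units.map (algebraMap F E).toMonoidHom v = u) → σ u = u) ↔
        ∀ u : Eˣ, u ^ (q - 1) = 1 → σ u = u := by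
    simp only [← MonoidHom.mem_range, hrange, MonoidHom.mem_ker, powMonoidHom_apply, hcardF]
  have hcount := IsCyclic.card_mulAut_fixing_pow_eq_one_mul_totient
    (hcardE ▸ dvd_mul_right (q - 1) (q + 1) : q - 1 ∣ Nat.card Eˣ)
  rw [hcardE, Nat.totient_sub_one_mul_add_one, mul_comm] at hcount
  rw [Nat.card_congr (Equiv.subtypeEquivRight hfix)]
  exact Nat.eq_of_mul_eq_mul_left (Nat.totient_pos.2 (by omega)) hcount
end

section
/- Let q ≥ 2 be a natural number. The number of units u of ZMod(q²−1) whose image under the natural ring homomorphism ZMod(q²−1) → ZMod(q−1) (which exists since (q−1) divides (q²−1)) equals 1 is 2·φ(q+1) if q is odd, and φ(q+1) if q is even, where φ denotes Euler's totient function (Nat.totient). -/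
/-!
The units in question form the kernel of the reduction map `(ℤ/(q²-1))ˣ → (ℤ/(q-1))ˣ`,
which is surjective, so there are `φ(q²-1) / φ(q-1)` of them. Since `q²-1 = (q-1)(q+1)` and
`g = gcd(q-1, q+1)` is `2` for odd `q` and `1` for even `q`, the identity
`φ(g) φ(ab) = φ(a) φ(b) g` gives `φ(q²-1) = φ(q-1) φ(q+1) g`.
-/

open Nat

theorem ZMod.card_units_castHom_eq_one_mul_totient {m n : ℕ} [NeZero n] (h : m ∣ n) :
    Nat.card {u : (ZMod n)ˣ // ZMod.castHom h (ZMod m) u = 1} * φ m = φ n := by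
  have : NeZero m := ⟨fun hm => NeZero.ne n (Nat.eq_zero_of_zero_dvd (hm ▸ h))⟩
  have hker : Nat.card {u : (ZMod n)ˣ // ZMod.castHom h (ZMod m) u = 1} =
      Nat.card (ZMod.unitsMap h).ker :=
    Nat.card_congr <| Equiv.subtypeEquivRight fun u => by
      rw [MonoidHom.mem_ker, Units.ext_iff, ZMod.unitsMap_def, Units.coe_map]; rfl
  have hindex : (ZMod.unitsMap h).ker.index = Nat.card (ZMod m)ˣ := by
    rw [Subgroup.index_ker, MonoidHom.range_eq_top.mpr (ZMod.unitsMap_surjective h),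
      Subgroup.card_top]
  rw [hker, ← ZMod.card_units_eq_totient, ← ZMod.card_units_eq_totient,
    ← Nat.card_eq_fintype_card, ← Nat.card_eq_fintype_card, ← hindex, Subgroup.card_mul_index]

theorem Nat.sq_sub_one_eq (q : ℕ) : q ^ 2 - 1 = (q - 1) * (q + 1) := by
  simpa [Nat.mul_comm] using Nat.sq_sub_sq q 1

theorem Nat.gcd_sub_one_add_one : ∀ q : ℕ, (q - 1).gcd (q + 1) = if Odd q then 2 else 1
  | 0 => by simp
  | q + 1 => by
    rw [Nat.add_sub_cancel, add_assoc, one_add_one_eq_two, add_comm, Nat.gcd_add_self_right]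
    split_ifs with hq <;> rw [Nat.odd_add_one, Nat.not_odd_iff_even] at hq
    · exact Nat.gcd_eq_right (even_iff_two_dvd.mp hq)
    · exact Nat.coprime_two_right.mpr (Nat.not_even_iff_odd.mp hq)

theorem Nat.totient_sq_sub_one (q : ℕ) :
    φ (q ^ 2 - 1) = φ (q - 1) * φ (q + 1) * if Odd q then 2 else 1 := by
  have h := Nat.totient_gcd_mul_totient_mul (q - 1) (q + 1)
  have hφ : φ (if Odd q then 2 else 1) = 1 := by split_ifs <;> simp
  rwa [Nat.gcd_sub_one_add_one, hφ, one_mul, ← Nat.sq_sub_one_eq] at h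

/-- For `q ≥ 2`, the number of units of `ZMod (q²−1)` mapping to `1` under the natural
ring homomorphism `ZMod (q²−1) → ZMod (q−1)` is `2·φ(q+1)` if `q` is odd and `φ(q+1)`
if `q` is even. -/
theorem card_units_castHom_eq_one (q : ℕ) (hq : 2 ≤ q) :
    Nat.card {u : (ZMod (q ^ 2 - 1))ˣ //
        ZMod.castHom (show (q - 1) ∣ (q ^ 2 - 1) from
          ⟨q + 1, by rw [← one_pow 2, Nat.sq_sub_sq]; exact Nat.mul_comm _ _⟩) (ZMod (q - 1))
          (u : ZMod (q ^ 2 - 1)) = 1} =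
      if Odd q then 2 * Nat.totient (q + 1) else Nat.totient (q + 1) := by
  have : NeZero (q ^ 2 - 1) :=
    ⟨by rw [Nat.sq_sub_one_eq]; exact Nat.mul_ne_zero (by omega) (by omega)⟩
  have h := ZMod.card_units_castHom_eq_one_mul_totient (Dvd.intro _ (Nat.sq_sub_one_eq q).symm)
  rw [Nat.totient_sq_sub_one] at h
  have hpos : 0 < φ (q - 1) := Nat.totient_pos.mpr (by omega)
  refine Nat.eq_of_mul_eq_mul_right hpos (h.trans ?_)
  split_ifs <;> ring
end

section
/- For every finite field F, the group GL₂(F[t]) is generated by the image of GL₂(F) (matrices with constant entries, embedded via the constant-polynomial ring homomorphism) together with the unipotent elements u(a) = [[1,a],[0,1]] for a ∈ F[t]; i.e. the subgroup closure of the union of these two sets is all of GL₂(F[t]). -/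
open Polynomial

noncomputable def weylGL2 (R : Type*) [CommRing R] : Matrix.GeneralLinearGroup (Fin 2) R :=
  ⟨!![0, -1; 1, 0], !![0, 1; -1, 0], by simp [Matrix.one_fin_two], by simp [Matrix.one_fin_two]⟩

section Euclidean

variable {R : Type*} [EuclideanDomain R]

lemma weylGL2_mul_unip_mul_apply_one_zero (M : Matrix.GeneralLinearGroup (Fin 2) R) :
    (weylGL2 R * unip (-(M 0 0 / M 1 0)) * M) 1 0 = M 0 0 % M 1 0 := by
  rw [EuclideanDomain.mod_eq_sub_mul_div]
  simp [weylGL2, unip, Matrix.mul_apply, Fin.sum_univ_two]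
  ring

theorem GL2_subgroup_eq_top_of_weyl_mem_of_upperTriangular_mem
    (H : Subgroup (Matrix.GeneralLinearGroup (Fin 2) R)) (hw : weylGL2 R ∈ H)
    (hT : ∀ M : Matrix.GeneralLinearGroup (Fin 2) R, M 1 0 = 0 → M ∈ H) : H = ⊤ := by
  refine (Subgroup.eq_top_iff' H).mpr fun M => ?_
  induction M using (InvImage.wf (fun M : Matrix.GeneralLinearGroup (Fin 2) R => M 1 0)
    EuclideanDomain.r_wellFounded).induction with
  | _ M ih =>
    by_cases hc : M 1 0 = 0
    · exact hT M hc
    set g := weylGL2 R * unip (-(M 0 0 / M 1 0))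
    have hg : g ∈ H := mul_mem hw (hT _ (by simp [unip]))
    have hgM : g * M ∈ H := by
      apply ih
      show EuclideanDomain.r ((g * M) 1 0) (M 1 0)
      rw [weylGL2_mul_unip_mul_apply_one_zero]
      exact EuclideanDomain.mod_lt _ hc
    simpa using mul_mem (inv_mem hg) hgM

end Euclidean

section Polynomial

variable {K : Type*} [Field K]

lemma embGL2_weylGL2 : embGL2 K (weylGL2 K) = weylGL2 K[X] := by
  ext i j; fin_cases i <;> fin_cases j <;> simp [embGL2, weylGL2]

lemma exists_embGL2_mul_unip_of_apply_one_zero_eq_zero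
    (M : Matrix.GeneralLinearGroup (Fin 2) K[X]) (hM : M 1 0 = 0) :
    ∃ g p, M = embGL2 K g * unip p := by
  have hdet : IsUnit (M 0 0 * M 1 1) := by
    simpa [Matrix.det_fin_two, hM] using (Matrix.isUnit_iff_isUnit_det _).mp M.isUnit
  obtain ⟨a, ha, hCa⟩ := Polynomial.isUnit_iff.mp (isUnit_of_mul_isUnit_left hdet)
  obtain ⟨d, hd, hCd⟩ := Polynomial.isUnit_iff.mp (isUnit_of_mul_isUnit_right hdet)
  refine ⟨Matrix.GeneralLinearGroup.mkOfDetNeZero !![a, 0; 0, d]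
    (by simpa [Matrix.det_fin_two] using mul_ne_zero ha.ne_zero hd.ne_zero),
    C a⁻¹ * M 0 1, ?_⟩
  ext i j
  fin_cases i <;> fin_cases j <;>
    simp [embGL2, unip, Matrix.mul_apply, Fin.sum_univ_two, hM, ← hCa, ← hCd, ← mul_assoc,
      ← C_mul, mul_inv_cancel₀ ha.ne_zero]

end Polynomial

theorem GL2_polynomial_generated_by_constants_and_unipotents_general
    (F : Type) [Field F] :
    Subgroup.closure (Set.range (embGL2 F) ∪ Set.range (unip : Polynomial F →
      Matrix.GeneralLinearGroup (Fin 2) (Polynomial F))) = ⊤ := by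
  apply GL2_subgroup_eq_top_of_weyl_mem_of_upperTriangular_mem
  · rw [← embGL2_weylGL2]
    exact Subgroup.subset_closure (Or.inl ⟨_, rfl⟩)
  · intro M hM
    obtain ⟨g, p, rfl⟩ := exists_embGL2_mul_unip_of_apply_one_zero_eq_zero M hM
    exact mul_mem (Subgroup.subset_closure (Or.inl ⟨g, rfl⟩))
      (Subgroup.subset_closure (Or.inr ⟨p, rfl⟩))

/-- For every finite field `F`, the group `GL₂(F[t])` is generated by the image of
`GL₂(F)` together with the unipotent elements `u(a)`, `a ∈ F[t]`. -/
theorem GL2_polynomial_generated_by_constants_and_unipotents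
    (F : Type) [Field F] [Fintype F] :
    Subgroup.closure (Set.range (embGL2 F) ∪ Set.range (unip : Polynomial F →
      Matrix.GeneralLinearGroup (Fin 2) (Polynomial F))) = ⊤ :=
  GL2_polynomial_generated_by_constants_and_unipotents_general F
end
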